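/- Let (M_n) be a vector-valued martingale adapted to a filtration (ℱ_n), and let (d_n) be a positive deterministic sequence with d_n ↑ ∞. If Σ_{n≥1} d_n^{-2} E[‖M_n - M_{n-1}‖² | ℱ_{n-1}] < ∞ almost surely, then d_n^{-1} M_n → 0 almost surely. -/

import Mathlib

/-!
For a real square-integrable martingale `f` with predictable quadratic variation
`A n = ∑ k < n, E[(f (k+1) - f k)² | ℱ k]`, the martingale transform that switches off as soon
as `A` would exceed `K` is bounded in `L²`, so `f` converges almost surely on `{A ∞ ≤ K}`, hence
on `{A ∞ < ∞}`. Applied to `∑ k < n, d (k+1)⁻¹ (f (k+1) - f k)`, whose quadratic variation is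
the series of the hypothesis, this gives almost sure convergence of that series, and Kronecker's
lemma turns it into `d n⁻¹ f n → 0`. The vector-valued statement follows coordinatewise, since
each coordinate increment is dominated by the norm of the increment.
-/

open MeasureTheory Filter Finset Topology Asymptotics

section Series

variable {E : Type*} [NormedAddCommGroup E] [NormedSpace ℝ E]

theorem sum_range_eq_smul_sub_sum_smul {d : ℕ → ℝ} (hd : ∀ n, d n ≠ 0) (x : ℕ → E) (n : ℕ) :
    ∑ k ∈ range n, x k = d n • ∑ k ∈ range n, (d (k + 1))⁻¹ • x k
      - ∑ k ∈ range n, (d (k + 1) - d k) • ∑ j ∈ range k, (d (j + 1))⁻¹ • x j := by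
  induction n with
  | zero => simp
  | succ n ih =>
    rw [sum_range_succ, ih, sum_range_succ, sum_range_succ, smul_add, smul_smul,
      mul_inv_cancel₀ (hd (n + 1)), one_smul, sub_smul]
    abel

/-- **Kronecker's lemma**. -/
theorem tendsto_inv_smul_sum_of_tendsto_sum_inv_smul {d : ℕ → ℝ} (hdpos : ∀ n, 0 < d n)
    (hdmono : Monotone d) (hdtop : Tendsto d atTop atTop) {x : ℕ → E} {c : E}
    (hx : Tendsto (fun n => ∑ k ∈ range n, (d (k + 1))⁻¹ • x k) atTop (𝓝 c)) :
    Tendsto (fun n => (d n)⁻¹ • ∑ k ∈ range n, x k) atTop (𝓝 0) := by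
  set s := fun n => ∑ k ∈ range n, (d (k + 1))⁻¹ • x k
  set w := fun k => d (k + 1) - d k
  have hw : ∀ k, 0 ≤ w k := fun k => sub_nonneg.2 (hdmono k.le_succ)
  have hsum_w : ∀ n, ∑ k ∈ range n, w k = d n - d 0 := sum_range_sub d
  have hsplit : ∀ n, (d n)⁻¹ • ∑ k ∈ range n, x k =
      (s n - c) + ((d n)⁻¹ * d 0) • c - (d n)⁻¹ • ∑ k ∈ range n, w k • (s k - c) := by
    intro n
    have hdn : (d n)⁻¹ * d n = 1 := inv_mul_cancel₀ (hdpos n).ne'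
    rw [sum_range_eq_smul_sub_sum_smul (fun n => (hdpos n).ne') x n]
    simp only [smul_sub, sum_sub_distrib, ← sum_smul, hsum_w]
    rw [smul_smul, smul_smul, hdn, mul_sub, hdn]
    module
  have hr : Tendsto (fun n => s n - c) atTop (𝓝 0) := tendsto_sub_nhds_zero_iff.2 hx
  have hweighted : Tendsto (fun n => (d n)⁻¹ • ∑ k ∈ range n, w k • (s k - c)) atTop (𝓝 0) := by
    refine IsLittleO.tendsto_inv_smul_nhds_zero ?_
    have h1 : (fun n => ∑ k ∈ range n, w k • (s k - c)) =o[atTop] fun n => ∑ k ∈ range n, w k := by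
      refine IsLittleO.sum_range ?_ hw ?_
      · simpa using (isBigO_refl w atTop).smul_isLittleO ((isLittleO_one_iff ℝ).2 hr)
      · simpa only [hsum_w, sub_eq_add_neg] using tendsto_atTop_add_const_right _ (-d 0) hdtop
    refine h1.trans_isBigO (isBigO_of_le _ fun n => ?_)
    rw [hsum_w, Real.norm_of_nonneg (sub_nonneg.2 (hdmono (Nat.zero_le n))),
      Real.norm_of_nonneg (hdpos n).le]
    linarith [hdpos 0]
  have hconst : Tendsto (fun n => ((d n)⁻¹ * d 0) • c) atTop (𝓝 0) := by
    simpa using (hdtop.inv_tendsto_atTop.mul_const (d 0)).smul_const c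
  simpa [hsplit] using (hr.add hconst).sub hweighted

theorem sum_range_ite_le_of_nonneg {v : ℕ → ℝ} (hv : ∀ k, 0 ≤ v k) {K : ℝ} (hK : 0 ≤ K)
    (n : ℕ) : ∑ k ∈ range n, (if ∑ j ∈ range (k + 1), v j ≤ K then v k else 0) ≤ K := by
  suffices h : ∑ k ∈ range n, (if ∑ j ∈ range (k + 1), v j ≤ K then v k else 0) ≤
      min K (∑ j ∈ range n, v j) from h.trans (min_le_left _ _)
  induction n with
  | zero => simp [hK]
  | succ n ih =>
    rw [sum_range_succ, sum_range_succ]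
    split_ifs with h
    · have := ih.trans (min_le_right _ _)
      exact le_min (by linarith) (by linarith)
    · exact (add_zero _).trans_le
        (ih.trans (min_le_min le_rfl (le_add_of_nonneg_right (hv n))))

end Series

namespace MeasureTheory

variable {Ω : Type*} {m0 : MeasurableSpace Ω} {μ : Measure Ω} {ℱ : Filtration ℕ m0}

theorem integral_mul_condExp {m : MeasurableSpace Ω} (hm : m ≤ m0) [SigmaFinite (μ.trim hm)]
    {f g : Ω → ℝ} (hg : StronglyMeasurable[m] g) (hgf : Integrable (g * f) μ)
    (hf : Integrable f μ) : ∫ ω, g ω * μ[f|m] ω ∂μ = ∫ ω, g ω * f ω ∂μ := by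
  calc ∫ ω, g ω * μ[f|m] ω ∂μ = ∫ ω, μ[g * f|m] ω ∂μ :=
        integral_congr_ae (condExp_mul_of_stronglyMeasurable_left hg hgf hf).symm
    _ = ∫ ω, g ω * f ω ∂μ := integral_condExp hm

theorem Martingale.sum_mul_sub [IsFiniteMeasure μ] {R : ℝ} {f ξ : ℕ → Ω → ℝ}
    (hf : Martingale f ℱ μ) (hξ : StronglyAdapted ℱ ξ) (hbdd : ∀ n ω, ξ n ω ≤ R)
    (hnonneg : ∀ n ω, 0 ≤ ξ n ω) :
    Martingale (fun n => ∑ k ∈ range n, ξ k * (f (k + 1) - f k)) ℱ μ := by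
  have hneg : (fun n => ∑ k ∈ range n, ξ k * (f (k + 1) - f k)) =
      -fun n => ∑ k ∈ range n, ξ k * ((-f) (k + 1) - (-f) k) := by
    ext n : 1
    rw [Pi.neg_apply, ← sum_neg_distrib]
    exact sum_congr rfl fun k _ => by simp only [Pi.neg_apply]; ring
  refine martingale_iff.2 ⟨?_, hf.submartingale.sum_mul_sub hξ hbdd hnonneg⟩
  rw [hneg]
  exact (hf.neg.submartingale.sum_mul_sub hξ hbdd hnonneg).neg

theorem Martingale.integral_sq_succ [IsFiniteMeasure μ] {f : ℕ → Ω → ℝ}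
    (hf : Martingale f ℱ μ) (hf2 : ∀ n, MemLp (f n) 2 μ) (n : ℕ) :
    ∫ ω, f (n + 1) ω ^ 2 ∂μ = ∫ ω, f n ω ^ 2 ∂μ + ∫ ω, (f (n + 1) ω - f n ω) ^ 2 ∂μ := by
  have hcross : ∫ ω, f n ω * f (n + 1) ω ∂μ = ∫ ω, f n ω ^ 2 ∂μ := by
    rw [← integral_mul_condExp (ℱ.le n) (hf.stronglyMeasurable n)
      ((hf2 n).integrable_mul (hf2 (n + 1))) (hf.integrable (n + 1))]
    refine integral_congr_ae ?_
    filter_upwards [hf.condExp_ae_eq n.le_succ] with ω hω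
    rw [hω, sq]
  have hsq : ∀ k, Integrable (fun ω => f k ω ^ 2) μ := fun k => (hf2 k).integrable_sq
  have hprod : Integrable (fun ω => f n ω * f (n + 1) ω) μ := (hf2 n).integrable_mul (hf2 (n + 1))
  have hexpand : (fun ω => (f (n + 1) ω - f n ω) ^ 2) =
      fun ω => f (n + 1) ω ^ 2 - 2 * (f n ω * f (n + 1) ω) + f n ω ^ 2 := by
    ext ω; ring
  rw [hexpand, integral_add, integral_sub, integral_const_mul, hcross]
  · ring
  exacts [hsq _, hprod.const_mul 2, (hsq _).sub (hprod.const_mul 2), hsq n]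

theorem Martingale.integral_sq_eq_sum [IsFiniteMeasure μ] {f : ℕ → Ω → ℝ}
    (hf : Martingale f ℱ μ) (hf2 : ∀ n, MemLp (f n) 2 μ) (n : ℕ) :
    ∫ ω, f n ω ^ 2 ∂μ = ∫ ω, f 0 ω ^ 2 ∂μ + ∑ k ∈ range n, ∫ ω, (f (k + 1) ω - f k ω) ^ 2 ∂μ := by
  induction n with
  | zero => simp
  | succ n ih => rw [hf.integral_sq_succ hf2, ih, sum_range_succ, add_assoc]

theorem Martingale.exists_ae_tendsto_of_integral_sq_le [IsFiniteMeasure μ] {f : ℕ → Ω → ℝ}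
    (hf : Martingale f ℱ μ) (hf2 : ∀ n, MemLp (f n) 2 μ) {C : ℝ}
    (hC : ∀ n, ∫ ω, f n ω ^ 2 ∂μ ≤ C) :
    ∀ᵐ ω ∂μ, ∃ c, Tendsto (fun n => f n ω) atTop (𝓝 c) := by
  refine hf.submartingale.exists_ae_tendsto_of_bdd (R := ((C + μ.real Set.univ) / 2).toNNReal)
    fun n => ?_
  have hint : Integrable (fun ω => (f n ω ^ 2 + 1) / 2) μ :=
    ((hf2 n).integrable_sq.add (integrable_const 1)).div_const 2
  -- `|x| ≤ (x ^ 2 + 1) / 2` turns the second-moment bound into an `L¹` bound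
  have hL1 : ∫ ω, ‖f n ω‖ ∂μ ≤ (C + μ.real Set.univ) / 2 := by
    calc ∫ ω, ‖f n ω‖ ∂μ ≤ ∫ ω, (f n ω ^ 2 + 1) / 2 ∂μ :=
          integral_mono (hf.integrable n).norm hint fun ω => by
            rw [Real.norm_eq_abs]
            nlinarith [sq_nonneg (|f n ω| - 1), sq_abs (f n ω)]
      _ = (∫ ω, f n ω ^ 2 ∂μ + μ.real Set.univ) / 2 := by
          rw [integral_div, integral_add (hf2 n).integrable_sq (integrable_const 1)]
          simp
      _ ≤ (C + μ.real Set.univ) / 2 := by linarith [hC n]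
  rw [eLpNorm_one_eq_lintegral_enorm, ← ofReal_integral_norm_eq_lintegral_enorm (hf.integrable n)]
  exact ENNReal.ofReal_le_ofReal hL1

theorem memLp_sum_mul_sub {p : ENNReal} {R : ℝ} {f ξ : ℕ → Ω → ℝ} (hf : ∀ n, MemLp (f n) p μ)
    (hξ : ∀ n, AEStronglyMeasurable (ξ n) μ) (hbdd : ∀ n ω, |ξ n ω| ≤ R) (n : ℕ) :
    MemLp (∑ k ∈ range n, ξ k * (f (k + 1) - f k)) p μ :=
  memLp_finsetSum' _ fun k _ =>
    ((hf (k + 1)).sub (hf k)).of_le_mul ((hξ k).mul ((hf (k + 1)).sub (hf k)).1)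
      (ae_of_all _ fun ω => by
        rw [Pi.mul_apply, norm_mul, Real.norm_eq_abs]
        exact mul_le_mul_of_nonneg_right (hbdd k ω) (norm_nonneg _))

theorem Martingale.integral_sq_sum_mul_sub [IsFiniteMeasure μ] {R : ℝ} {f ξ : ℕ → Ω → ℝ}
    (hf : Martingale f ℱ μ) (hf2 : ∀ n, MemLp (f n) 2 μ) (hξ : StronglyAdapted ℱ ξ)
    (hbdd : ∀ n ω, ξ n ω ≤ R) (hnonneg : ∀ n ω, 0 ≤ ξ n ω) (n : ℕ) :
    ∫ ω, (∑ k ∈ range n, ξ k * (f (k + 1) - f k)) ω ^ 2 ∂μ =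
      ∑ k ∈ range n, ∫ ω, ξ k ω ^ 2 * μ[fun ω' => (f (k + 1) ω' - f k ω') ^ 2|ℱ k] ω ∂μ := by
  have habs : ∀ n ω, |ξ n ω| ≤ R := fun n ω => (abs_of_nonneg (hnonneg n ω)).trans_le (hbdd n ω)
  rw [(hf.sum_mul_sub hξ hbdd hnonneg).integral_sq_eq_sum
    (memLp_sum_mul_sub hf2 (fun k => (hξ k).mono (ℱ.le k) |>.aestronglyMeasurable) habs)]
  rw [show ∫ ω, (∑ k ∈ range 0, ξ k * (f (k + 1) - f k)) ω ^ 2 ∂μ = 0 by simp, zero_add]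
  refine sum_congr rfl fun k _ => ?_
  have hsq : Integrable (fun ω => (f (k + 1) ω - f k ω) ^ 2) μ :=
    ((hf2 (k + 1)).sub (hf2 k)).integrable_sq
  have hξ2 : StronglyMeasurable[ℱ k] (ξ k ^ 2) := (hξ k).pow 2
  have hint : Integrable (ξ k ^ 2 * fun ω => (f (k + 1) ω - f k ω) ^ 2) μ := by
    refine hsq.bdd_mul (c := R ^ 2) (hξ2.mono (ℱ.le k)).aestronglyMeasurable
      (ae_of_all _ fun ω => ?_)
    rw [Pi.pow_apply, norm_pow, Real.norm_eq_abs]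
    exact pow_le_pow_left₀ (abs_nonneg _) (habs k ω) 2
  refine Eq.trans ?_ (integral_mul_condExp (ℱ.le k) hξ2 hint hsq).symm
  refine integral_congr_ae (ae_of_all _ fun ω => ?_)
  simp only [sum_range_succ, Pi.add_apply, Pi.mul_apply, Pi.sub_apply, Pi.pow_apply]
  ring

theorem Martingale.integral_sq_sum_mul_sub_le [IsFiniteMeasure μ] {R C : ℝ} {f ξ : ℕ → Ω → ℝ}
    (hf : Martingale f ℱ μ) (hf2 : ∀ n, MemLp (f n) 2 μ) (hξ : StronglyAdapted ℱ ξ)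
    (hbdd : ∀ n ω, ξ n ω ≤ R) (hnonneg : ∀ n ω, 0 ≤ ξ n ω) {n : ℕ}
    (hC : ∀ᵐ ω ∂μ,
      ∑ k ∈ range n, ξ k ω ^ 2 * μ[fun ω' => (f (k + 1) ω' - f k ω') ^ 2|ℱ k] ω ≤ C) :
    ∫ ω, (∑ k ∈ range n, ξ k * (f (k + 1) - f k)) ω ^ 2 ∂μ ≤ μ.real Set.univ * C := by
  have hint : ∀ k, Integrable
      (fun ω => ξ k ω ^ 2 * μ[fun ω' => (f (k + 1) ω' - f k ω') ^ 2|ℱ k] ω) μ := fun k =>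
    integrable_condExp.bdd_mul (c := R ^ 2) (((hξ k).mono (ℱ.le k)).aestronglyMeasurable.pow 2)
      (ae_of_all _ fun ω => by
        rw [norm_pow, Real.norm_of_nonneg (hnonneg k ω)]
        exact pow_le_pow_left₀ (hnonneg k ω) (hbdd k ω) 2)
  rw [hf.integral_sq_sum_mul_sub hf2 hξ hbdd hnonneg, ← integral_finsetSum _ fun k _ => hint k]
  calc _ ≤ ∫ _, C ∂μ :=
        integral_mono_ae (integrable_finsetSum _ fun k _ => hint k) (integrable_const C) hC
    _ = μ.real Set.univ * C := by simp

theorem Martingale.ae_exists_tendsto_of_sum_condExp_sq_le [IsFiniteMeasure μ] {f : ℕ → Ω → ℝ}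
    (hf : Martingale f ℱ μ) (hf2 : ∀ n, MemLp (f n) 2 μ) {K : ℝ} (hK : 0 ≤ K) :
    ∀ᵐ ω ∂μ, (∀ n, ∑ k ∈ range n, μ[fun ω' => (f (k + 1) ω' - f k ω') ^ 2|ℱ k] ω ≤ K) →
      ∃ c, Tendsto (fun n => f n ω) atTop (𝓝 c) := by
  set V : ℕ → Ω → ℝ := fun k => μ[fun ω' => (f (k + 1) ω' - f k ω') ^ 2|ℱ k]
  set A : ℕ → Ω → ℝ := fun n ω => ∑ k ∈ range n, V k ω
  have hA : ∀ k, StronglyMeasurable[ℱ k] (A (k + 1)) := fun k =>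
    Finset.stronglyMeasurable_fun_sum _ fun j hj =>
      stronglyMeasurable_condExp.mono (ℱ.mono (Nat.lt_succ_iff.1 (mem_range.1 hj)))
  -- predictable stopping: `ξ k` switches off before the conditional variance exceeds `K`
  set ξ : ℕ → Ω → ℝ := fun k => {ω | A (k + 1) ω ≤ K}.indicator 1
  have hξ : StronglyAdapted ℱ ξ := fun k =>
    stronglyMeasurable_const.indicator (measurableSet_le (hA k).measurable measurable_const)
  have hξ_le : ∀ k ω, ξ k ω ≤ 1 := fun k ω =>
    Set.indicator_apply_le' (fun _ => le_rfl) fun _ => zero_le_one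
  have hξ_nonneg : ∀ k ω, 0 ≤ ξ k ω := fun k ω => Set.indicator_nonneg (fun _ _ => zero_le_one) ω
  set g := fun n => ∑ k ∈ range n, ξ k * (f (k + 1) - f k)
  have hg2 : ∀ n, MemLp (g n) 2 μ := memLp_sum_mul_sub hf2
    (fun k => ((hξ k).mono (ℱ.le k)).aestronglyMeasurable)
    fun k ω => (abs_of_nonneg (hξ_nonneg k ω)).trans_le (hξ_le k ω)
  have hVnn : ∀ᵐ ω ∂μ, ∀ k, 0 ≤ V k ω :=
    ae_all_iff.2 fun k => condExp_nonneg (ae_of_all _ fun ω => sq_nonneg _)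
  have hbound : ∀ n, ∫ ω, g n ω ^ 2 ∂μ ≤ μ.real Set.univ * K := fun n =>
    hf.integral_sq_sum_mul_sub_le hf2 hξ hξ_le hξ_nonneg <| by
      filter_upwards [hVnn] with ω hω
      refine (sum_congr rfl fun k _ => ?_).trans_le (sum_range_ite_le_of_nonneg hω hK n)
      simp only [ξ, A, Set.indicator_apply, Set.mem_ofPred_eq, Pi.one_apply]
      split_ifs <;> ring
  have hg : Martingale g ℱ μ := hf.sum_mul_sub hξ hξ_le hξ_nonneg
  filter_upwards [hg.exists_ae_tendsto_of_integral_sq_le hg2 hbound] with ω ⟨c, hc⟩ hAK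
  have hg_eq : ∀ n, g n ω + f 0 ω = f n ω := by
    intro n
    have hξ_one : ∀ k, ξ k ω = 1 := fun k =>
      Set.indicator_of_mem (show ω ∈ {ω | A (k + 1) ω ≤ K} from hAK (k + 1)) _
    have hg_apply : g n ω = ∑ k ∈ range n, (f (k + 1) ω - f k ω) := by
      simp only [g, Finset.sum_apply, Pi.mul_apply, Pi.sub_apply, hξ_one, one_mul]
    rw [hg_apply, sum_range_sub (f · ω)]
    ring
  exact ⟨c + f 0 ω, (hc.add_const (f 0 ω)).congr hg_eq⟩

theorem Martingale.ae_exists_tendsto_of_summable_condExp_sq [IsFiniteMeasure μ] {f : ℕ → Ω → ℝ}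
    (hf : Martingale f ℱ μ) (hf2 : ∀ n, MemLp (f n) 2 μ) :
    ∀ᵐ ω ∂μ, Summable (fun n => μ[fun ω' => (f (n + 1) ω' - f n ω') ^ 2|ℱ n] ω) →
      ∃ c, Tendsto (fun n => f n ω) atTop (𝓝 c) := by
  have hnonneg : ∀ k, 0 ≤ᵐ[μ] μ[fun ω' => (f (k + 1) ω' - f k ω') ^ 2|ℱ k] := fun k =>
    condExp_nonneg (ae_of_all _ fun ω => sq_nonneg _)
  filter_upwards [ae_all_iff.2 fun K : ℕ =>
      hf.ae_exists_tendsto_of_sum_condExp_sq_le hf2 K.cast_nonneg, ae_all_iff.2 hnonneg]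
    with ω hω hnonneg hsum
  obtain ⟨K, hK⟩ := exists_nat_ge (∑' k, μ[fun ω' => (f (k + 1) ω' - f k ω') ^ 2|ℱ k] ω)
  exact hω K fun n => (hsum.sum_le_tsum _ fun k _ => hnonneg k).trans hK

theorem Martingale.ae_tendsto_inv_mul_zero_of_summable [IsFiniteMeasure μ] {f : ℕ → Ω → ℝ}
    (hf : Martingale f ℱ μ) (hf2 : ∀ n, MemLp (f n) 2 μ) {d : ℕ → ℝ} (hdpos : ∀ n, 0 < d n)
    (hdmono : Monotone d) (hdtop : Tendsto d atTop atTop)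
    (hsum : ∀ᵐ ω ∂μ, Summable (fun n =>
      ((d (n + 1)) ^ 2)⁻¹ * μ[fun ω' => (f (n + 1) ω' - f n ω') ^ 2|ℱ n] ω)) :
    ∀ᵐ ω ∂μ, Tendsto (fun n => (d n)⁻¹ * f n ω) atTop (𝓝 0) := by
  set ξ : ℕ → Ω → ℝ := fun k _ => (d (k + 1))⁻¹
  have hξ_le : ∀ k ω, ξ k ω ≤ (d 0)⁻¹ := fun k _ =>
    inv_anti₀ (hdpos 0) (hdmono (Nat.zero_le _))
  have hξ_nonneg : ∀ k ω, 0 ≤ ξ k ω := fun k _ => (inv_pos.2 (hdpos _)).le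
  set g := fun n => ∑ k ∈ range n, ξ k * (f (k + 1) - f k)
  have hg : Martingale g ℱ μ := hf.sum_mul_sub (fun _ => stronglyMeasurable_const) hξ_le hξ_nonneg
  have hg2 : ∀ n, MemLp (g n) 2 μ := memLp_sum_mul_sub hf2 (fun _ => aestronglyMeasurable_const)
    fun k ω => (abs_of_nonneg (hξ_nonneg k ω)).trans_le (hξ_le k ω)
  have hincr : ∀ k ω, g (k + 1) ω - g k ω = (d (k + 1))⁻¹ * (f (k + 1) ω - f k ω) := by
    intro k ω
    simp only [g, ξ, sum_range_succ, Pi.add_apply, Pi.mul_apply, Pi.sub_apply, add_sub_cancel_left]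
  have hcondVar : ∀ k, μ[fun ω => (g (k + 1) ω - g k ω) ^ 2|ℱ k] =ᵐ[μ]
      fun ω => ((d (k + 1)) ^ 2)⁻¹ * μ[fun ω' => (f (k + 1) ω' - f k ω') ^ 2|ℱ k] ω := by
    intro k
    have hsq : (fun ω => (g (k + 1) ω - g k ω) ^ 2) =
        ((d (k + 1)) ^ 2)⁻¹ • fun ω => (f (k + 1) ω - f k ω) ^ 2 := by
      ext ω
      rw [hincr, Pi.smul_apply, smul_eq_mul, mul_pow, inv_pow]
    rw [hsq]
    exact condExp_smul _ _ _
  filter_upwards [hg.ae_exists_tendsto_of_summable_condExp_sq hg2, hsum, ae_all_iff.2 hcondVar]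
    with ω hconv hω hVω
  obtain ⟨c, hc⟩ := hconv (hω.congr fun k => (hVω k).symm)
  have hkron := tendsto_inv_smul_sum_of_tendsto_sum_inv_smul hdpos hdmono hdtop
    (x := fun k => f (k + 1) ω - f k ω) (c := c) (by simpa [g, ξ] using hc)
  have hf0 : Tendsto (fun n => (d n)⁻¹ * f 0 ω) atTop (𝓝 0) := by
    simpa using hdtop.inv_tendsto_atTop.mul_const (f 0 ω)
  rw [← add_zero (0 : ℝ)]
  refine (hf0.add hkron).congr fun n => ?_
  rw [sum_range_sub (f · ω), smul_eq_mul]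
  ring

theorem Martingale.continuousLinearMap_comp {ι E F : Type*} [Preorder ι] [NormedAddCommGroup E]
    [NormedSpace ℝ E] [CompleteSpace E] [NormedAddCommGroup F] [NormedSpace ℝ F] [CompleteSpace F]
    {ℱ : Filtration ι m0} {f : ι → Ω → E} (hf : Martingale f ℱ μ) (L : E →L[ℝ] F) :
    Martingale (fun i ω => L (f i ω)) ℱ μ :=
  ⟨fun i => L.continuous.comp_stronglyMeasurable (hf.stronglyMeasurable i), fun _ j hij =>
    (L.comp_condExp_comm (hf.integrable j)).symm.trans ((hf.condExp_ae_eq hij).fun_comp L)⟩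

end MeasureTheory

/-- Chow-type strong law for martingales: if the normalized conditional squared
increments are summable, then `d n⁻¹ • M n → 0` almost surely. -/
theorem stmt10 {Ω : Type*} {m : MeasurableSpace Ω} (μ : Measure Ω) [IsProbabilityMeasure μ]
    (ℱ : Filtration ℕ m) (dim : ℕ)
    (M : ℕ → Ω → EuclideanSpace ℝ (Fin dim))
    (hM : Martingale M ℱ μ)
    (hM2 : ∀ n, MemLp (M n) 2 μ)
    (d : ℕ → ℝ) (hdpos : ∀ n, 0 < d n) (hdmono : Monotone d)
    (hdtop : Tendsto d atTop atTop)
    (hsum : ∀ᵐ ω ∂μ, Summable (fun n =>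
      ((d (n + 1)) ^ 2)⁻¹ *
        (condExp (ℱ n) μ (fun ω' => ‖M (n + 1) ω' - M n ω'‖ ^ 2) ω))) :
    ∀ᵐ ω ∂μ, Tendsto (fun n => (d n)⁻¹ • M n ω) atTop (nhds 0) := by
  have hcoord : ∀ i, ∀ᵐ ω ∂μ, Tendsto (fun n => (d n)⁻¹ * M n ω i) atTop (𝓝 0) := by
    intro i
    have hMi := hM.continuousLinearMap_comp (EuclideanSpace.proj (𝕜 := ℝ) i)
    have hMi2 : ∀ n, MemLp (fun ω => M n ω i) 2 μ := fun n =>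
      (EuclideanSpace.proj (𝕜 := ℝ) i).comp_memLp' (hM2 n)
    have hle : ∀ n, μ[fun ω => (M (n + 1) ω i - M n ω i) ^ 2|ℱ n] ≤ᵐ[μ]
        μ[fun ω => ‖M (n + 1) ω - M n ω‖ ^ 2|ℱ n] := fun n =>
      condExp_mono ((hMi2 (n + 1)).sub (hMi2 n)).integrable_sq
        ((hM2 (n + 1)).sub (hM2 n)).norm.integrable_sq (ae_of_all _ fun ω =>
          (sq_abs _).symm.trans_le (pow_le_pow_left₀ (abs_nonneg _)
            (PiLp.norm_apply_le (M (n + 1) ω - M n ω) i) 2))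
    refine hMi.ae_tendsto_inv_mul_zero_of_summable hMi2 hdpos hdmono hdtop ?_
    have hnonneg : ∀ n, 0 ≤ᵐ[μ] μ[fun ω => (M (n + 1) ω i - M n ω i) ^ 2|ℱ n] := fun n =>
      condExp_nonneg (ae_of_all _ fun ω => sq_nonneg _)
    filter_upwards [hsum, ae_all_iff.2 hle, ae_all_iff.2 hnonneg] with ω hω hleω hnonneg
    exact hω.of_nonneg_of_le (fun n => mul_nonneg (by positivity) (hnonneg n))
      fun n => mul_le_mul_of_nonneg_left (hleω n) (by positivity)
  filter_upwards [ae_all_iff.2 hcoord] with ω hω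
  exact ((PiLp.continuous_toLp 2 _).tendsto 0).comp (tendsto_pi_nhds.2 hω)
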